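/- arXiv:1403.4231 — 3 statements merged into one kernel-verified Lean document; each statement's English description precedes it below -/
import Mathlib

section
/- In the deformation setting over a square-zero parameter λ, the product • makes A₁ = A ⊕ λA an associative (in general noncommutative) algebra; and for every module with Leibniz operators E, the deformed left and right actions satisfy (a • b) • e = a • (b • e), (a • e) • b = a • (e • b) and (e • a) • b = e • (a • b) for all a, b ∈ A₁ and e ∈ E₁. Hence E₁ is an A₁-bimodule. -/
/-! Only the `λ`-components need checking. Write `{x, y} = ω^{ij} δ_i(x) δ_j(y)` and
`{x, e} = ω^{ij} δ_i(x) ∇_{E,j}(e)`. The Leibniz rules make both brackets derivations in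
each argument, with `{x, y e} = y {x, e} + {x, y} e`; this alone gives associativity and the
left-module law, while the two laws involving the right action also use the antisymmetry
`{y, x} = -{x, y}` inherited from `ω`. -/

namespace Stmt2

/-- The semiclassical data: derivations `δ_i` and an antisymmetric `ω^{ij}` with
entries in a commutative algebra `A` over a field `K` of characteristic zero. -/
structure DefData (K A : Type) [Field K] [CharZero K] [CommRing A] [Algebra K A]
    (n : ℕ) where
  δ : Fin n → A → A
  ω : Fin n → Fin n → A
  δ_add : ∀ i a b, δ i (a + b) = δ i a + δ i b
  δ_leibniz : ∀ i a b, δ i (a * b) = a * δ i b + b * δ i a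
  ω_anti : ∀ i j, ω i j = - ω j i

variable {K A : Type} [Field K] [CharZero K] [CommRing A] [Algebra K A] {n : ℕ}

/-- The scalar `1/2` in `A`. -/
noncomputable def half (K A : Type) [Field K] [CharZero K] [CommRing A] [Algebra K A] : A :=
  algebraMap K A (2⁻¹ : K)

/-- The deformed product on `A₁ = A ⊕ λA` (a pair `(a₀, a₁)` stands for `a₀ + λ a₁`,
with `λ² = 0`):  `a • b = ab + (λ/2) ω^{ij} δ_i(a) δ_j(b)`, extended `λ`-bilinearly. -/
noncomputable def mul1 (D : DefData K A n) (a b : A × A) : A × A :=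
  (a.1 * b.1,
   a.1 * b.2 + a.2 * b.1 + half K A * ∑ i, ∑ j, D.ω i j * D.δ i a.1 * D.δ j b.1)

/-- A module with Leibniz operators: an `A`-module `E` with additive maps `∇_{E,j}`
satisfying `∇_{E,j}(a e) = a ∇_{E,j} e + δ_j(a) e`. -/
structure LeibMod (D : DefData K A n) (E : Type) [AddCommGroup E] [Module A E] where
  nab : Fin n → E → E
  nab_add : ∀ j e f, nab j (e + f) = nab j e + nab j f
  nab_smul : ∀ j a e, nab j (a • e) = a • nab j e + D.δ j a • e

variable {D : DefData K A n} {E : Type} [AddCommGroup E] [Module A E]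

/-- Deformed left action of `A₁` on `E₁ = E ⊕ λE`:
`a • e = a e + (λ/2) ω^{ij} δ_i(a) ∇_{E,j}(e)`, extended `λ`-bilinearly. -/
noncomputable def lact (L : LeibMod D E) (a : A × A) (e : E × E) : E × E :=
  (a.1 • e.1,
   a.1 • e.2 + a.2 • e.1 + ∑ i, ∑ j, (half K A * D.ω i j * D.δ i a.1) • L.nab j e.1)

/-- Deformed right action of `A₁` on `E₁ = E ⊕ λE`:
`e • a = a e − (λ/2) ω^{ij} δ_i(a) ∇_{E,j}(e)`, extended `λ`-bilinearly. -/
noncomputable def ract (L : LeibMod D E) (e : E × E) (a : A × A) : E × E :=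
  (a.1 • e.1,
   a.1 • e.2 + a.2 • e.1 - ∑ i, ∑ j, (half K A * D.ω i j * D.δ i a.1) • L.nab j e.1)

def DefData.poisson (D : DefData K A n) (x y : A) : A :=
  ∑ i, ∑ j, D.ω i j * D.δ i x * D.δ j y

def LeibMod.poisson (L : LeibMod D E) (x : A) (e : E) : E :=
  ∑ i, ∑ j, (D.ω i j * D.δ i x) • L.nab j e

namespace DefData

variable (D : DefData K A n)

theorem poisson_mul_left (x y z : A) :
    D.poisson (x * y) z = x * D.poisson y z + y * D.poisson x z := by
  simp only [poisson, Finset.mul_sum, ← Finset.sum_add_distrib, D.δ_leibniz]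
  exact Finset.sum_congr rfl fun _ _ => Finset.sum_congr rfl fun _ _ => by ring

theorem poisson_mul_right (x y z : A) :
    D.poisson x (y * z) = y * D.poisson x z + z * D.poisson x y := by
  simp only [poisson, Finset.mul_sum, ← Finset.sum_add_distrib, D.δ_leibniz]
  exact Finset.sum_congr rfl fun _ _ => Finset.sum_congr rfl fun _ _ => by ring

theorem poisson_antisymm (x y : A) : D.poisson y x = -D.poisson x y := by
  rw [poisson, Finset.sum_comm, poisson, ← Finset.sum_neg_distrib]
  refine Finset.sum_congr rfl fun i _ => ?_
  rw [← Finset.sum_neg_distrib]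
  refine Finset.sum_congr rfl fun j _ => ?_
  rw [D.ω_anti j i]
  ring

theorem mul1_eq (a b : A × A) :
    mul1 D a b = (a.1 * b.1, a.1 * b.2 + a.2 * b.1 + half K A * D.poisson a.1 b.1) :=
  rfl

end DefData

namespace LeibMod

variable (L : LeibMod D E)

theorem poisson_mul_left (x y : A) (e : E) :
    L.poisson (x * y) e = x • L.poisson y e + y • L.poisson x e := by
  simp only [poisson, Finset.smul_sum, ← Finset.sum_add_distrib, D.δ_leibniz, smul_smul]
  exact Finset.sum_congr rfl fun _ _ => Finset.sum_congr rfl fun _ _ => by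
    rw [← add_smul]; congr 1; ring

theorem poisson_smul_right (x y : A) (e : E) :
    L.poisson x (y • e) = y • L.poisson x e + D.poisson x y • e := by
  simp only [poisson, DefData.poisson, L.nab_smul, Finset.smul_sum, Finset.sum_smul,
    ← Finset.sum_add_distrib, smul_add, smul_smul]
  exact Finset.sum_congr rfl fun _ _ => Finset.sum_congr rfl fun _ _ => by
    rw [mul_comm y]

theorem lact_eq (a : A × A) (e : E × E) :
    lact L a e = (a.1 • e.1, a.1 • e.2 + a.2 • e.1 + half K A • L.poisson a.1 e.1) := by
  simp only [lact, poisson, Finset.smul_sum, smul_smul, mul_assoc]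

theorem ract_eq (e : E × E) (a : A × A) :
    ract L e a = (a.1 • e.1, a.1 • e.2 + a.2 • e.1 - half K A • L.poisson a.1 e.1) := by
  simp only [ract, poisson, Finset.smul_sum, smul_smul, mul_assoc]

end LeibMod

/-- the deformed product makes `A₁ = A ⊕ λA` associative, and the deformed
left and right actions make `E₁ = E ⊕ λE` an `A₁`-bimodule: `(a•b)•e = a•(b•e)`,
`(a•e)•b = a•(e•b)` and `(e•a)•b = e•(a•b)`. -/
theorem statement_2 (D : DefData K A n) {E : Type} [AddCommGroup E] [Module A E]
    (L : LeibMod D E) :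
    (∀ a b c : A × A, mul1 D (mul1 D a b) c = mul1 D a (mul1 D b c)) ∧
    (∀ (a b : A × A) (e : E × E), lact L (mul1 D a b) e = lact L a (lact L b e)) ∧
    (∀ (a : A × A) (e : E × E) (b : A × A), ract L (lact L a e) b = lact L a (ract L e b)) ∧
    (∀ (e : E × E) (a b : A × A), ract L (ract L e a) b = ract L e (mul1 D a b)) := by
  refine ⟨fun a b c => ?_, fun a b e => ?_, fun a e b => ?_, fun e a b => ?_⟩
  · simp only [D.mul1_eq, D.poisson_mul_left, D.poisson_mul_right, Prod.mk.injEq]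
    constructor <;> ring
  · simp only [L.lact_eq, D.mul1_eq, L.poisson_mul_left, L.poisson_smul_right, Prod.mk.injEq]
    constructor <;> module
  · simp only [L.lact_eq, L.ract_eq, L.poisson_smul_right, Prod.mk.injEq,
      D.poisson_antisymm a.1 b.1]
    constructor <;> module
  · simp only [L.ract_eq, D.mul1_eq, L.poisson_mul_left, L.poisson_smul_right, Prod.mk.injEq,
      D.poisson_antisymm a.1 b.1]
    constructor <;> module

end Stmt2
end

section
/- Let k be a commutative ring, E and W k-modules, λ a square-zero formal parameter (work with k[λ]/(λ²)-linear maps between the scalar extensions of tensor products). Suppose σ_E : E ⊗ W → W ⊗ E and σ_W : W ⊗ W → W ⊗ W have the form σ_E(e ⊗ ξ) = ξ ⊗ e + λ Σ_α T_α(ξ) ⊗ T'_α(e) and σ_W(η ⊗ ξ) = ξ ⊗ η + λ Σ_α S_α(ξ) ⊗ S'_α(η), for finitely many k-linear maps T_α, S_α, S'_α : W → W and T'_α : E → E. Then the braid relation (σ_W ⊗ id_E) ∘ (id_W ⊗ σ_E) ∘ (σ_E ⊗ id_W) = (id_W ⊗ σ_E) ∘ (σ_E ⊗ id_W) ∘ (id_E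 ⊗ σ_W) holds as maps E ⊗ W ⊗ W → W ⊗ W ⊗ E over k[λ]/(λ²); indeed both sides send e ⊗ ξ ⊗ η to η ⊗ ξ ⊗ e + λ Σ_α (η ⊗ T_α(ξ) ⊗ T'_α(e) + T_α(η) ⊗ ξ ⊗ T'_α(e) + S_α(η) ⊗ S'_α(ξ) ⊗ e). -/
/-!
Modulo `λ²` the correction terms of a first-order deformation of the flip enter linearly, so each
side of the braid relation is the flip `e ⊗ ξ ⊗ η ↦ η ⊗ ξ ⊗ e` plus one first-order correction per
crossing; the three crossings on either side produce the same three corrections. This needs the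
deformations on all pure tensors, over any commutative semiring with a square-zero element. The
hypotheses only give them on tensors of elements `1 ⊗ m`, but these generate the scalar
extensions, so `σ_E` and `σ_W` agree everywhere with the deformations built from the base changes
of `T_α, T'_α, S_α, S'_α`.
-/

open scoped TensorProduct
open DualNumber

namespace Stmt6

variable (k : Type) [CommRing k]

/-- Scalar extension by the dual numbers `k[λ]/(λ²)`. -/
abbrev Ext (M : Type) [AddCommGroup M] [Module k M] : Type := DualNumber k ⊗[k] M

open TensorProduct

section Braid

variable {A X Y : Type*} [CommSemiring A] [AddCommMonoid X] [Module A X]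
  [AddCommMonoid Y] [Module A Y]

variable (σE : X ⊗[A] Y →ₗ[A] Y ⊗[A] X) (σW : Y ⊗[A] Y →ₗ[A] Y ⊗[A] Y)

def braidLHS : (X ⊗[A] Y) ⊗[A] Y →ₗ[A] (Y ⊗[A] Y) ⊗[A] X :=
  map σW LinearMap.id ∘ₗ (TensorProduct.assoc A Y Y X).symm.toLinearMap ∘ₗ
    map LinearMap.id σE ∘ₗ (TensorProduct.assoc A Y X Y).toLinearMap ∘ₗ map σE LinearMap.id

def braidRHS : (X ⊗[A] Y) ⊗[A] Y →ₗ[A] (Y ⊗[A] Y) ⊗[A] X :=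
  (TensorProduct.assoc A Y Y X).symm.toLinearMap ∘ₗ map LinearMap.id σE ∘ₗ
    (TensorProduct.assoc A Y X Y).toLinearMap ∘ₗ map σE LinearMap.id ∘ₗ
    (TensorProduct.assoc A X Y Y).symm.toLinearMap ∘ₗ map LinearMap.id σW ∘ₗ
    (TensorProduct.assoc A X Y Y).toLinearMap

variable {σE σW} {t : A} (ht : t * t = 0) {ι : Type*} [Fintype ι]
  {T S S' : ι → Y →ₗ[A] Y} {T' : ι → X →ₗ[A] X}
  (hσE : ∀ x y, σE (x ⊗ₜ y) = y ⊗ₜ x + t • ∑ α, T α y ⊗ₜ T' α x)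
  (hσW : ∀ y z, σW (y ⊗ₜ z) = z ⊗ₜ y + t • ∑ α, S α z ⊗ₜ S' α y)

include ht hσE hσW

lemma braidLHS_tmul (x : X) (y z : Y) :
    braidLHS σE σW ((x ⊗ₜ y) ⊗ₜ z) = (z ⊗ₜ y) ⊗ₜ x + t • ∑ α,
      ((z ⊗ₜ T α y) ⊗ₜ T' α x + (T α z ⊗ₜ y) ⊗ₜ T' α x + (S α z ⊗ₜ S' α y) ⊗ₜ x) := by
  simp only [braidLHS, LinearMap.comp_apply, LinearEquiv.coe_coe, map_tmul,
    LinearMap.id_coe, id_eq, hσE, hσW, add_tmul, tmul_add,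
    ← smul_tmul', tmul_smul, map_add, map_smul, map_sum,
    sum_tmul, tmul_sum, assoc_tmul, assoc_symm_tmul, Finset.smul_sum, smul_smul, ht, zero_smul,
    Finset.sum_const_zero, add_zero, smul_add, Finset.sum_add_distrib]
  abel

lemma braidRHS_tmul (x : X) (y z : Y) :
    braidRHS σE σW ((x ⊗ₜ y) ⊗ₜ z) = (z ⊗ₜ y) ⊗ₜ x + t • ∑ α,
      ((z ⊗ₜ T α y) ⊗ₜ T' α x + (T α z ⊗ₜ y) ⊗ₜ T' α x + (S α z ⊗ₜ S' α y) ⊗ₜ x) := by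
  simp only [braidRHS, LinearMap.comp_apply, LinearEquiv.coe_coe, map_tmul,
    LinearMap.id_coe, id_eq, hσE, hσW, add_tmul, tmul_add,
    ← smul_tmul', tmul_smul, map_add, map_smul, map_sum,
    sum_tmul, tmul_sum, assoc_tmul, assoc_symm_tmul, Finset.smul_sum, smul_smul, ht, zero_smul,
    Finset.sum_const_zero, add_zero, smul_add, Finset.sum_add_distrib]
  abel

theorem braidLHS_eq_braidRHS : braidLHS σE σW = braidRHS σE σW :=
  ext_threefold fun x y z =>
    (braidLHS_tmul ht hσE hσW x y z).trans (braidRHS_tmul ht hσE hσW x y z).symm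

end Braid

section BaseChange

variable {R A M N P : Type*} [CommSemiring R] [CommSemiring A] [Algebra R A]
  [AddCommMonoid M] [Module R M] [AddCommMonoid N] [Module R N] [AddCommMonoid P] [Module A P]

theorem baseChange_hom_ext {f g : A ⊗[R] M →ₗ[A] P} (h : ∀ m, f (1 ⊗ₜ m) = g (1 ⊗ₜ m)) :
    f = g := by
  ext x
  induction x using TensorProduct.induction_on with
  | zero => rw [map_zero, map_zero]
  | tmul a m => rw [← mul_one a, ← smul_eq_mul, ← smul_tmul', map_smul, map_smul, h]
  | add x y hx hy => rw [map_add, map_add, hx, hy]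

theorem baseChange_tensor_hom_ext {f g : (A ⊗[R] M) ⊗[A] (A ⊗[R] N) →ₗ[A] P}
    (h : ∀ m n, f ((1 ⊗ₜ m) ⊗ₜ (1 ⊗ₜ n)) = g ((1 ⊗ₜ m) ⊗ₜ (1 ⊗ₜ n))) : f = g :=
  TensorProduct.ext <| baseChange_hom_ext fun m => baseChange_hom_ext fun n => h m n

theorem baseChange_deformation_tmul
    {σ : (A ⊗[R] M) ⊗[A] (A ⊗[R] N) →ₗ[A] (A ⊗[R] N) ⊗[A] (A ⊗[R] M)}
    {t : A} {ι : Type*} [Fintype ι] {U : ι → N →ₗ[R] N} {V : ι → M →ₗ[R] M}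
    (hσ : ∀ m n, σ ((1 ⊗ₜ m) ⊗ₜ (1 ⊗ₜ n))
      = (1 ⊗ₜ n) ⊗ₜ (1 ⊗ₜ m) + t • ∑ α, (1 ⊗ₜ U α n) ⊗ₜ (1 ⊗ₜ V α m))
    (x : A ⊗[R] M) (y : A ⊗[R] N) :
    σ (x ⊗ₜ y) = y ⊗ₜ x + t • ∑ α, (U α).baseChange A y ⊗ₜ (V α).baseChange A x := by
  have hσ_eq : σ = (TensorProduct.comm A (A ⊗[R] M) (A ⊗[R] N)).toLinearMap + t • ∑ α,
      map ((U α).baseChange A) ((V α).baseChange A) ∘ₗ (TensorProduct.comm A _ _).toLinearMap :=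
    baseChange_tensor_hom_ext fun m n => by
      simp only [hσ, LinearMap.add_apply, LinearEquiv.coe_coe, comm_tmul, LinearMap.smul_apply,
        LinearMap.coe_sum, LinearMap.coe_comp, Finset.sum_apply, Function.comp_apply, map_tmul,
        LinearMap.baseChange_tmul]
  simp only [hσ_eq, LinearMap.add_apply, LinearEquiv.coe_coe, comm_tmul, LinearMap.smul_apply,
    LinearMap.coe_sum, LinearMap.coe_comp, Finset.sum_apply, Function.comp_apply, map_tmul]

end BaseChange

/-- order-`λ` deformations of the flip braiding satisfy the braid relation.
If `σ_E(e ⊗ ξ) = ξ ⊗ e + λ Σ_α T_α(ξ) ⊗ T'_α(e)` and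
`σ_W(η ⊗ ξ) = ξ ⊗ η + λ Σ_α S_α(ξ) ⊗ S'_α(η)` over `k[λ]/(λ²)`, then
`(σ_W ⊗ id)(id ⊗ σ_E)(σ_E ⊗ id) = (id ⊗ σ_E)(σ_E ⊗ id)(id ⊗ σ_W)` and both sides send
`e ⊗ ξ ⊗ η` to
`η ⊗ ξ ⊗ e + λ Σ_α (η ⊗ T_α ξ ⊗ T'_α e + T_α η ⊗ ξ ⊗ T'_α e + S_α η ⊗ S'_α ξ ⊗ e)`. -/
theorem statement_6 (E W : Type) [AddCommGroup E] [AddCommGroup W]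
    [Module k E] [Module k W]
    (ι : Type) [Fintype ι]
    (T S S' : ι → W →ₗ[k] W) (T' : ι → E →ₗ[k] E)
    (σE : Ext k E ⊗[DualNumber k] Ext k W →ₗ[DualNumber k]
      Ext k W ⊗[DualNumber k] Ext k E)
    (σW : Ext k W ⊗[DualNumber k] Ext k W →ₗ[DualNumber k]
      Ext k W ⊗[DualNumber k] Ext k W)
    (hσE : ∀ (e : E) (ξ : W),
      σE (((1 : DualNumber k) ⊗ₜ[k] e) ⊗ₜ[DualNumber k] ((1 : DualNumber k) ⊗ₜ[k] ξ))
        = ((1 : DualNumber k) ⊗ₜ[k] ξ) ⊗ₜ[DualNumber k] ((1 : DualNumber k) ⊗ₜ[k] e)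
          + (ε : DualNumber k) •
              ∑ α : ι, ((1 : DualNumber k) ⊗ₜ[k] (T α ξ)) ⊗ₜ[DualNumber k]
                ((1 : DualNumber k) ⊗ₜ[k] (T' α e)))
    (hσW : ∀ (η ξ : W),
      σW (((1 : DualNumber k) ⊗ₜ[k] η) ⊗ₜ[DualNumber k] ((1 : DualNumber k) ⊗ₜ[k] ξ))
        = ((1 : DualNumber k) ⊗ₜ[k] ξ) ⊗ₜ[DualNumber k] ((1 : DualNumber k) ⊗ₜ[k] η)
          + (ε : DualNumber k) •
              ∑ α : ι, ((1 : DualNumber k) ⊗ₜ[k] (S α ξ)) ⊗ₜ[DualNumber k]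
                ((1 : DualNumber k) ⊗ₜ[k] (S' α η))) :
    (TensorProduct.map σW LinearMap.id ∘ₗ
        (TensorProduct.assoc (DualNumber k) (Ext k W) (Ext k W) (Ext k E)).symm.toLinearMap ∘ₗ
        TensorProduct.map LinearMap.id σE ∘ₗ
        (TensorProduct.assoc (DualNumber k) (Ext k W) (Ext k E) (Ext k W)).toLinearMap ∘ₗ
        TensorProduct.map σE LinearMap.id
      = (TensorProduct.assoc (DualNumber k) (Ext k W) (Ext k W) (Ext k E)).symm.toLinearMap ∘ₗ
        TensorProduct.map LinearMap.id σE ∘ₗ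
        (TensorProduct.assoc (DualNumber k) (Ext k W) (Ext k E) (Ext k W)).toLinearMap ∘ₗ
        TensorProduct.map σE LinearMap.id ∘ₗ
        (TensorProduct.assoc (DualNumber k) (Ext k E) (Ext k W) (Ext k W)).symm.toLinearMap ∘ₗ
        TensorProduct.map LinearMap.id σW ∘ₗ
        (TensorProduct.assoc (DualNumber k) (Ext k E) (Ext k W) (Ext k W)).toLinearMap) ∧
    (∀ (e : E) (ξ η : W),
      (TensorProduct.map σW LinearMap.id ∘ₗ
        (TensorProduct.assoc (DualNumber k) (Ext k W) (Ext k W) (Ext k E)).symm.toLinearMap ∘ₗ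
        TensorProduct.map LinearMap.id σE ∘ₗ
        (TensorProduct.assoc (DualNumber k) (Ext k W) (Ext k E) (Ext k W)).toLinearMap ∘ₗ
        TensorProduct.map σE LinearMap.id)
        ((((1 : DualNumber k) ⊗ₜ[k] e) ⊗ₜ[DualNumber k] ((1 : DualNumber k) ⊗ₜ[k] ξ))
          ⊗ₜ[DualNumber k] ((1 : DualNumber k) ⊗ₜ[k] η))
      = (((1 : DualNumber k) ⊗ₜ[k] η) ⊗ₜ[DualNumber k] ((1 : DualNumber k) ⊗ₜ[k] ξ))
          ⊗ₜ[DualNumber k] ((1 : DualNumber k) ⊗ₜ[k] e)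
        + (ε : DualNumber k) •
            ∑ α : ι,
              ((((1 : DualNumber k) ⊗ₜ[k] η) ⊗ₜ[DualNumber k]
                  ((1 : DualNumber k) ⊗ₜ[k] (T α ξ))) ⊗ₜ[DualNumber k]
                  ((1 : DualNumber k) ⊗ₜ[k] (T' α e))
               + (((1 : DualNumber k) ⊗ₜ[k] (T α η)) ⊗ₜ[DualNumber k]
                  ((1 : DualNumber k) ⊗ₜ[k] ξ)) ⊗ₜ[DualNumber k]
                  ((1 : DualNumber k) ⊗ₜ[k] (T' α e))
               + (((1 : DualNumber k) ⊗ₜ[k] (S α η)) ⊗ₜ[DualNumber k]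
                  ((1 : DualNumber k) ⊗ₜ[k] (S' α ξ))) ⊗ₜ[DualNumber k]
                  ((1 : DualNumber k) ⊗ₜ[k] e))) := by
  have hE := baseChange_deformation_tmul hσE
  have hW := baseChange_deformation_tmul hσW
  refine ⟨braidLHS_eq_braidRHS DualNumber.eps_mul_eps hE hW, fun e ξ η => ?_⟩
  have h := braidLHS_tmul DualNumber.eps_mul_eps hE hW (1 ⊗ₜ e) (1 ⊗ₜ ξ) (1 ⊗ₜ η)
  simp only [LinearMap.baseChange_tmul] at h
  exact h

end Stmt6
end

section
/- Let M be a module over a commutative ring in which 2 is invertible, ι an index type, and B, C : ι × ι × ι → M functions with B(k,n,m) = B(k,m,n) and C(k,n,m) = −C(k,m,n) for all k, n, m. Then there exists a unique K : ι × ι × ι → M satisfying K(n,k,m) + K(m,k,n) = B(k,n,m) and K(k,n,m) − K(k,m,n) = C(k,n,m) for all k, n, m; it is given explicitly by K(n,k,m) = (1/2)[B(k,n,m) − B(n,k,m) + B(m,n,k) + C(m,n,k) + C(k,n,m) + C(n,k,m)]. -/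
/-!
Adding the three instances of the symmetric equation at the cyclic permutations of `(k, n, m)`
with alternating signs, and the three antisymmetric equations at suitable permutations, leaves
exactly `2 • K n k m` on the left: this is the Koszul formula for the Levi-Civita connection.
Conversely the symmetry of `B` and antisymmetry of `C` make the formula solve both equations.
-/

namespace Stmt17

variable {R M ι : Type} [CommRing R] [AddCommGroup M] [Module R M] [Invertible (2 : R)]

def IsKoszulSolution (B C K : ι → ι → ι → M) : Prop :=
  ∀ k n m, K n k m + K m k n = B k n m ∧ K k n m - K k m n = C k n m

variable (R) in
def koszulSolution (B C : ι → ι → ι → M) : ι → ι → ι → M :=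
  fun n k m => (⅟(2 : R)) • (B k n m - B n k m + B m n k + C m n k + C k n m + C n k m)

theorem IsKoszulSolution.eq_koszulSolution {B C K : ι → ι → ι → M}
    (hK : IsKoszulSolution B C K) : K = koszulSolution R B C := by
  funext n k m
  rw [koszulSolution, ← smul_eq_iff_eq_invOf_smul, ← (hK k n m).1, ← (hK n k m).1,
    ← (hK m n k).1, ← (hK m n k).2, ← (hK k n m).2, ← (hK n k m).2, two_smul]
  abel

theorem isKoszulSolution_koszulSolution {B C : ι → ι → ι → M}
    (hB : ∀ k n m, B k n m = B k m n) (hC : ∀ k n m, C k n m = - C k m n) :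
    IsKoszulSolution B C (koszulSolution R B C) := by
  intro k n m
  constructor
  · rw [koszulSolution, koszulSolution, ← smul_add, invOf_smul_eq_iff,
      hB k m n, hB n m k, hB m k n, hC n m k, hC k m n, hC m k n, two_smul]
    abel
  · rw [koszulSolution, koszulSolution, ← smul_sub, invOf_smul_eq_iff, hB k m n, hC k m n,
      two_smul]
    abel

/-- the linear system underlying the quantum Koszul formula. Given `B`
symmetric in its last two arguments and `C` antisymmetric in its last two arguments,
there is a unique `K` with `K(n,k,m) + K(m,k,n) = B(k,n,m)` and
`K(k,n,m) − K(k,m,n) = C(k,n,m)`, given by the explicit formula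
`K(n,k,m) = (1/2)[B(k,n,m) − B(n,k,m) + B(m,n,k) + C(m,n,k) + C(k,n,m) + C(n,k,m)]`. -/
theorem statement_17 {R M ι : Type} [CommRing R] [AddCommGroup M] [Module R M]
    [Invertible (2 : R)]
    (B C : ι → ι → ι → M)
    (hB : ∀ k n m, B k n m = B k m n)
    (hC : ∀ k n m, C k n m = - C k m n) :
    (∃! K : ι → ι → ι → M,
      ∀ k n m, K n k m + K m k n = B k n m ∧ K k n m - K k m n = C k n m) ∧
    (∀ K : ι → ι → ι → M,
      (∀ k n m, K n k m + K m k n = B k n m ∧ K k n m - K k m n = C k n m) →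
      ∀ n k m, K n k m
        = (⅟(2 : R)) • (B k n m - B n k m + B m n k + C m n k + C k n m + C n k m)) :=
  ⟨⟨koszulSolution R B C, isKoszulSolution_koszulSolution hB hC,
      fun _ hK => IsKoszulSolution.eq_koszulSolution hK⟩,
    fun _ hK n k m => congrFun₃ (IsKoszulSolution.eq_koszulSolution (R := R) hK) n k m⟩

end Stmt17
end
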